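/- Every finite graph G = (V, E) with n ≥ 2 vertices admits a labeling of its vertices by distinct labels such that along every path of G whose labels are strictly increasing, any two vertices of the path are within distance O(log² n) in G. Concretely: if G admits a weak (d, c)-decomposition, then assigning each vertex a label whose most significant part is its cluster's color (and breaking ties arbitrarily with distinct lower-order parts) yields a (2·c·(d+1))-diameter ordering of G. -/

import Mathlib

private lemma dist_tri {V : Type*} (G : SimpleGraph V) {u v w : V}
    (h1 : G.Reachable u v) (h2 : G.Reachable v w) :
    G.dist u w ≤ G.dist u v + G.dist v w := by
  obtain ⟨p, hp⟩ := h1.exists_walk_length_eq_dist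
  obtain ⟨q, hq⟩ := h2.exists_walk_length_eq_dist
  rw [← hp, ← hq, ← SimpleGraph.Walk.length_append]
  exact SimpleGraph.dist_le _

/-- Auxiliary: along a strictly increasing walk, every support vertex `b` is
within `(c - 1 - color x) * (d+1)` of some vertex `w` in the start's cluster. -/
private lemma aux_cluster {V : Type*} (G : SimpleGraph V) (d c : ℕ)
    (cluster : V → ℕ) (col : ℕ → Fin c)
    (hdiam : ∀ u v : V, cluster u = cluster v → G.dist u v ≤ d)
    (hreach : ∀ u v : V, cluster u = cluster v → G.Reachable u v)
    (hproper : ∀ u v : V, G.Adj u v → cluster u ≠ cluster v →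
      col (cluster u) ≠ col (cluster v))
    (π : V → ℕ)
    (hmsb : ∀ u v : V, col (cluster u) < col (cluster v) → π u < π v) :
    ∀ (x y : V) (p : G.Walk x y),
      p.support.Chain' (fun a b => π a < π b) →
      ∀ b ∈ p.support, ∃ w ∈ p.support, cluster w = cluster x ∧
        G.dist w b ≤ (c - 1 - (col (cluster x)).val) * (d + 1) := by
  intro x y p
  induction p with
  | nil =>
    intro _ b hb
    rw [SimpleGraph.Walk.support_nil, List.mem_singleton] at hb
    subst hb
    exact ⟨b, by simp, rfl, by simp [SimpleGraph.dist_self]⟩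
  | @cons x x' y h q ih =>
    intro hchain b hb
    rw [SimpleGraph.Walk.support_cons] at hb hchain ⊢
    have hq0 : q.support = x' :: q.support.tail := q.support_eq_cons
    have hchain' : q.support.Chain' (fun a b => π a < π b) := hchain.tail
    have hxx' : π x < π x' := by
      rw [hq0, List.Chain', List.isChain_cons_cons] at hchain
      exact hchain.1
    rcases List.mem_cons.mp hb with hbx | hbq
    · subst hbx
      exact ⟨b, by simp, rfl, by simp [SimpleGraph.dist_self]⟩
    · obtain ⟨w, hw, hwc, hwd⟩ := ih hchain' b hbq
      by_cases hcc : cluster x' = cluster x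
      · rw [hcc] at hwd
        exact ⟨w, List.mem_cons_of_mem _ hw, hwc.trans hcc, hwd⟩
      · -- the color strictly increases
        have hne : col (cluster x) ≠ col (cluster x') :=
          hproper x x' h (fun e => hcc e.symm)
        have hlt : col (cluster x) < col (cluster x') := by
          rcases lt_or_gt_of_ne hne with h1 | h1
          · exact h1
          · exact absurd (hmsb x' x h1) (by omega)
        have hk' : (col (cluster x')).val < c := (col (cluster x')).isLt
        have hk : (col (cluster x)).val + 1 ≤ (col (cluster x')).val := hlt
        -- take w := x itself
        refine ⟨x, by simp, rfl, ?_⟩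
        have hr1 : G.Reachable x x' := SimpleGraph.Adj.reachable h
        have hr2 : G.Reachable x' w := hreach x' w hwc.symm
        have hr3 : G.Reachable w b := by
          obtain ⟨r1, r2, _⟩ := SimpleGraph.Walk.mem_support_iff_exists_append.mp hw
          obtain ⟨s1, s2, _⟩ := SimpleGraph.Walk.mem_support_iff_exists_append.mp hbq
          exact r1.reachable.symm.trans s1.reachable
        have t1 : G.dist x b ≤ G.dist x x' + G.dist x' b :=
          dist_tri G hr1 (hr2.trans hr3)
        have t2 : G.dist x' b ≤ G.dist x' w + G.dist w b :=
          dist_tri G hr2 hr3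
        have e1 : G.dist x x' ≤ 1 := by
          have := G.dist_le (SimpleGraph.Walk.cons h SimpleGraph.Walk.nil)
          simpa using this
        have e2 : G.dist x' w ≤ d := hdiam x' w hwc.symm
        -- arithmetic
        set s := c - 1 - (col (cluster x)).val with hs
        set s' := c - 1 - (col (cluster x')).val with hs'
        have hss : s' + 1 ≤ s := by omega
        have hprod : s' * (d + 1) + (d + 1) ≤ s * (d + 1) := by
          calc s' * (d + 1) + (d + 1) = (s' + 1) * (d + 1) := by ring
          _ ≤ s * (d + 1) := Nat.mul_le_mul_right _ hss
        omega

/-- If `G` admits a weak `(d, c)`-decomposition (clusters of weak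
diameter at most `d`, with a proper `c`-coloring of the cluster graph), then any
injective labeling `π` whose most significant part is the cluster color (i.e.
vertices in clusters of smaller color get smaller labels) is a
`2·c·(d+1)`-diameter ordering: along every path of `G` with strictly increasing
labels, any two vertices are within distance `2·c·(d+1)` in `G`. -/
theorem weak_decomposition_gives_low_diameter_ordering
    {V : Type*} (G : SimpleGraph V) (d c : ℕ)
    (cluster : V → ℕ) (col : ℕ → Fin c)
    -- weak diameter at most d
    (hdiam : ∀ u v : V, cluster u = cluster v → G.dist u v ≤ d)
    (hreach : ∀ u v : V, cluster u = cluster v → G.Reachable u v)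
    -- proper coloring of the cluster graph
    (hproper : ∀ u v : V, G.Adj u v → cluster u ≠ cluster v →
      col (cluster u) ≠ col (cluster v))
    (π : V → ℕ) (hinj : Function.Injective π)
    -- the most significant part of the label is the cluster color
    (hmsb : ∀ u v : V, col (cluster u) < col (cluster v) → π u < π v) :
    ∀ (x y : V) (p : G.Walk x y),
      p.support.Chain' (fun a b => π a < π b) →
      ∀ a ∈ p.support, ∀ b ∈ p.support, G.dist a b ≤ 2 * c * (d + 1) := by
  intro x y p hchain a ha b hb
  have hc : 0 < c := (col 0).pos
  have key : ∀ v ∈ p.support, G.Reachable x v ∧ G.dist x v ≤ d + (c - 1) * (d + 1) := by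
    intro v hv
    obtain ⟨r1, r2, _⟩ := SimpleGraph.Walk.mem_support_iff_exists_append.mp hv
    have hrv : G.Reachable x v := r1.reachable
    obtain ⟨w, hw, hwc, hwd⟩ :=
      aux_cluster G d c cluster col hdiam hreach hproper π hmsb x y p hchain v hv
    have h1 : G.dist x w ≤ d := hdiam x w hwc.symm
    have hrw : G.Reachable x w := hreach x w hwc.symm
    have h2 : G.dist x v ≤ G.dist x w + G.dist w v :=
      dist_tri G hrw (hrw.symm.trans hrv)
    have h3 : (c - 1 - (col (cluster x)).val) * (d + 1) ≤ (c - 1) * (d + 1) :=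
      Nat.mul_le_mul_right _ (by omega)
    exact ⟨hrv, by omega⟩
  obtain ⟨hra, hda⟩ := key a ha
  obtain ⟨hrb, hdb⟩ := key b hb
  have h4 : G.dist a b ≤ G.dist a x + G.dist x b := dist_tri G hra.symm hrb
  have h5 : G.dist a x = G.dist x a := SimpleGraph.dist_comm
  obtain ⟨t, rfl⟩ : ∃ t, c = t + 1 := ⟨c - 1, by omega⟩
  have : 2 * (t + 1) * (d + 1) = 2 * ((t + 1 - 1) * (d + 1)) + 2 * (d + 1) := by
    simp; ring
  omega
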